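/- Let k be a positive integer, K > 0, M > 0, δ ∈ (0,1), and n ≥ 1 an integer. Let u : Δ → ℝ^k have all coordinates nonnegative and satisfy, for all p, q ∈ Δ: ‖u(p) − u(q)‖ ≤ K·‖p − q‖ and |⟨u(p), p⟩ − ⟨u(q), q⟩| ≤ K·‖p − q‖. Let p^e ∈ Δ be a symmetric Nash equilibrium for u, i.e., ⟨u(p^e), q⟩ ≤ ⟨u(p^e), p^e⟩ for all q ∈ Δ. Let (Ω, 𝓕, P) be a probability space and X : Ω → ℝ^k a random variable taking values in Δ with E‖X − p^e‖² ≤ M/n. Then P( for all q ∈ Δ, ⟨u(X), q⟩ ≤ ⟨u(X), X⟩ + n^{−δ/2} ) ≥ 1 − 4K²M·n^{δ−1}; that is, X is an n^{−δ/2}-approximate Nash equilibrium with probability at least 1 − 4K²M·n^{δ−1}. (The concluding step of the paper's Proposition 1, combining the approximate-equilibrium chain inequality with Markov's inequality.) -/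

import Mathlib

/-!
Moving from the equilibrium `pe` to a strategy `p` changes the payoff of every `q ∈ Δ` and the
payoff of the strategy itself by at most `K ‖p - pe‖` each, so `p` is a `2K ‖p - pe‖`-approximate
equilibrium. Hence `X` is an `n^{-δ/2}`-approximate equilibrium whenever
`‖X - pe‖ < t := n^{-δ/2} / (2K)`, and Markov's inequality for `‖X - pe‖²` bounds the probability of
the complement by `(M / n) / t² = 4K²M n^{δ-1}`.
-/

open scoped RealInnerProductSpace
open MeasureTheory

noncomputable section

/-- The standard simplex `Δ` in `ℝ^k`. -/
def stdSimplexE (k : ℕ) : Set (EuclideanSpace ℝ (Fin k)) :=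
  {x | (∀ i, 0 ≤ x i) ∧ ∑ i, x i = 1}

lemma norm_le_one_of_mem_stdSimplexE {k : ℕ} {x : EuclideanSpace ℝ (Fin k)}
    (hx : x ∈ stdSimplexE k) : ‖x‖ ≤ 1 := by
  obtain ⟨h0, h1⟩ := hx
  rw [EuclideanSpace.norm_eq, Real.sqrt_le_one]
  calc ∑ i, ‖x i‖ ^ 2 ≤ ∑ i, x i := by
        refine Finset.sum_le_sum fun i _ => ?_
        have hle : x i ≤ 1 := h1 ▸ Finset.single_le_sum (fun j _ => h0 j) (Finset.mem_univ i)
        rw [Real.norm_eq_abs, sq_abs]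
        nlinarith [h0 i]
    _ = 1 := h1

lemma integrable_sq_norm_sub_of_mem_stdSimplexE {k : ℕ} {Ω : Type*} [MeasurableSpace Ω]
    {P : Measure Ω} [IsFiniteMeasure P] {X : Ω → EuclideanSpace ℝ (Fin k)} (hX : Measurable X)
    (hXΔ : ∀ ω, X ω ∈ stdSimplexE k) {pe : EuclideanSpace ℝ (Fin k)} (hpe : pe ∈ stdSimplexE k) :
    Integrable (fun ω => ‖X ω - pe‖ ^ 2) P := by
  have hbound : ∀ ω, ‖X ω - pe‖ ≤ 2 := fun ω => (norm_sub_le _ _).trans <| by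
    linarith [norm_le_one_of_mem_stdSimplexE (hXΔ ω), norm_le_one_of_mem_stdSimplexE hpe]
  refine .of_bound (by fun_prop) 4 <| ae_of_all _ fun ω => ?_
  rw [norm_pow, norm_norm]
  nlinarith [hbound ω, norm_nonneg (X ω - pe)]

lemma inner_le_inner_add_of_near_equilibrium {E : Type*} [NormedAddCommGroup E]
    [InnerProductSpace ℝ E] {u : E → E} {K : ℝ} {p pe q : E} (hq : ‖q‖ ≤ 1)
    (hLip : ‖u p - u pe‖ ≤ K * ‖p - pe‖) (hLip' : |⟪u p, p⟫ - ⟪u pe, pe⟫| ≤ K * ‖p - pe‖)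
    (heq : ⟪u pe, q⟫ ≤ ⟪u pe, pe⟫) :
    ⟪u p, q⟫ ≤ ⟪u p, p⟫ + 2 * K * ‖p - pe‖ := by
  have hshift : ⟪u p - u pe, q⟫ ≤ K * ‖p - pe‖ :=
    calc ⟪u p - u pe, q⟫ ≤ ‖u p - u pe‖ * ‖q‖ := real_inner_le_norm _ _
      _ ≤ ‖u p - u pe‖ := mul_le_of_le_one_right (norm_nonneg _) hq
      _ ≤ K * ‖p - pe‖ := hLip
  have hself := (abs_le.mp hLip').1
  rw [inner_sub_left] at hshift
  linarith

lemma one_sub_integral_div_le_measureReal_lt {Ω : Type*} [MeasurableSpace Ω] {P : Measure Ω}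
    [IsProbabilityMeasure P] {f : Ω → ℝ} (hf0 : 0 ≤ᵐ[P] f) (hf : Integrable f P) {c : ℝ}
    (hc : 0 < c) : 1 - (∫ ω, f ω ∂P) / c ≤ P.real {ω | f ω < c} := by
  have hcompl : {ω | f ω < c} = {ω | c ≤ f ω}ᶜ := by ext; simp
  have hmarkov : P.real {ω | c ≤ f ω} ≤ (∫ ω, f ω ∂P) / c := by
    rw [le_div_iff₀ hc, mul_comm]
    exact mul_meas_ge_le_integral_of_nonneg hf0 hf c
  rw [hcompl, probReal_compl_eq_one_sub₀ (nullMeasurableSet_le aemeasurable_const hf.aemeasurable)]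
  linarith

theorem stmt13_general (k : ℕ) (K M δ : ℝ) (hK : 0 < K) (n : ℕ) (hn : 1 ≤ n)
    (u : EuclideanSpace ℝ (Fin k) → EuclideanSpace ℝ (Fin k))
    (hLip : ∀ p ∈ stdSimplexE k, ∀ q ∈ stdSimplexE k, ‖u p - u q‖ ≤ K * ‖p - q‖)
    (hLip' : ∀ p ∈ stdSimplexE k, ∀ q ∈ stdSimplexE k,
      |⟪u p, p⟫ - ⟪u q, q⟫| ≤ K * ‖p - q‖)
    (pe : EuclideanSpace ℝ (Fin k)) (hpe : pe ∈ stdSimplexE k)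
    (heq : ∀ q ∈ stdSimplexE k, ⟪u pe, q⟫ ≤ ⟪u pe, pe⟫)
    {Ω : Type} [MeasurableSpace Ω] (P : Measure Ω) [IsProbabilityMeasure P]
    (X : Ω → EuclideanSpace ℝ (Fin k)) (hXmeas : Measurable X)
    (hXΔ : ∀ ω, X ω ∈ stdSimplexE k)
    (hvar : ∫ ω, ‖X ω - pe‖ ^ 2 ∂P ≤ M / (n : ℝ)) :
    1 - 4 * K ^ 2 * M * (n : ℝ) ^ (δ - 1) ≤
      (P {ω | ∀ q ∈ stdSimplexE k,
        ⟪u (X ω), q⟫ ≤ ⟪u (X ω), X ω⟫ + (n : ℝ) ^ (-(δ / 2))}).toReal := by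
  have hn0 : (0 : ℝ) < n := by exact_mod_cast hn
  set t := (n : ℝ) ^ (-(δ / 2)) / (2 * K) with ht
  have ht0 : 0 < t := by positivity
  have hgood : {ω | ‖X ω - pe‖ ^ 2 < t ^ 2} ⊆ {ω | ∀ q ∈ stdSimplexE k,
      ⟪u (X ω), q⟫ ≤ ⟪u (X ω), X ω⟫ + (n : ℝ) ^ (-(δ / 2))} := by
    intro ω hω q hq
    have hnear : 2 * K * ‖X ω - pe‖ ≤ (n : ℝ) ^ (-(δ / 2)) := by
      have := (lt_of_pow_lt_pow_left₀ 2 ht0.le hω).le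
      rw [ht, le_div_iff₀ (by positivity)] at this
      linarith
    linarith [inner_le_inner_add_of_near_equilibrium (norm_le_one_of_mem_stdSimplexE hq)
      (hLip _ (hXΔ ω) _ hpe) (hLip' _ (hXΔ ω) _ hpe) (heq q hq)]
  have hexp : 4 * K ^ 2 * M * (n : ℝ) ^ (δ - 1) = M / n / t ^ 2 := by
    have hsq : ((n : ℝ) ^ (-(δ / 2))) ^ 2 = ((n : ℝ) ^ δ)⁻¹ := by
      rw [← Real.rpow_two, ← Real.rpow_mul hn0.le, show -(δ / 2) * 2 = -δ by ring,
        Real.rpow_neg hn0.le]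
    rw [ht, div_pow, hsq, Real.rpow_sub hn0, Real.rpow_one]
    field_simp
    ring
  calc 1 - 4 * K ^ 2 * M * (n : ℝ) ^ (δ - 1)
      ≤ 1 - (∫ ω, ‖X ω - pe‖ ^ 2 ∂P) / t ^ 2 := by rw [hexp]; gcongr
    _ ≤ P.real {ω | ‖X ω - pe‖ ^ 2 < t ^ 2} :=
      one_sub_integral_div_le_measureReal_lt (ae_of_all _ fun ω => by positivity)
        (integrable_sq_norm_sub_of_mem_stdSimplexE hXmeas hXΔ hpe) (by positivity)
    _ ≤ _ := measureReal_mono hgood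

/-- under the Lipschitz/nonnegativity assumptions on `u` and with
`p^e ∈ Δ` a symmetric Nash equilibrium, if a `Δ`-valued random variable `X`
satisfies `E‖X − p^e‖² ≤ M/n`, then with probability at least
`1 − 4K²M·n^{δ−1}`, `X` is an `n^{−δ/2}`-approximate Nash equilibrium. -/
theorem stmt13 (k : ℕ) (hk : 0 < k) (K M δ : ℝ) (hK : 0 < K) (hM : 0 < M)
    (hδ : δ ∈ Set.Ioo (0 : ℝ) 1) (n : ℕ) (hn : 1 ≤ n)
    (u : EuclideanSpace ℝ (Fin k) → EuclideanSpace ℝ (Fin k))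
    (hnn : ∀ p ∈ stdSimplexE k, ∀ i, 0 ≤ u p i)
    (hLip : ∀ p ∈ stdSimplexE k, ∀ q ∈ stdSimplexE k, ‖u p - u q‖ ≤ K * ‖p - q‖)
    (hLip' : ∀ p ∈ stdSimplexE k, ∀ q ∈ stdSimplexE k,
      |⟪u p, p⟫ - ⟪u q, q⟫| ≤ K * ‖p - q‖)
    (pe : EuclideanSpace ℝ (Fin k)) (hpe : pe ∈ stdSimplexE k)
    (heq : ∀ q ∈ stdSimplexE k, ⟪u pe, q⟫ ≤ ⟪u pe, pe⟫)
    {Ω : Type} [MeasurableSpace Ω] (P : Measure Ω) [IsProbabilityMeasure P]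
    (X : Ω → EuclideanSpace ℝ (Fin k)) (hXmeas : Measurable X)
    (hXΔ : ∀ ω, X ω ∈ stdSimplexE k)
    (hvar : ∫ ω, ‖X ω - pe‖ ^ 2 ∂P ≤ M / (n : ℝ)) :
    1 - 4 * K ^ 2 * M * (n : ℝ) ^ (δ - 1) ≤
      (P {ω | ∀ q ∈ stdSimplexE k,
        ⟪u (X ω), q⟫ ≤ ⟪u (X ω), X ω⟫ + (n : ℝ) ^ (-(δ / 2))}).toReal :=
  stmt13_general k K M δ hK n hn u hLip hLip' pe hpe heq P X hXmeas hXΔ hvar
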